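/- arXiv:2412.15569 — 11 statements merged into one kernel-verified Lean document; each statement's English description precedes it below -/
import Mathlib

section
/- Let A be an associative algebra and M an A-bimodule. A linear map R : M → A is a relative Rota-Baxter operator (i.e. R(u)·R(v) = R(R(u)▷v + u◁R(v)) for all u,v ∈ M) if and only if its lift R̃ : A ⊕ M → A ⊕ M defined by R̃(a,u) = (R(u), 0) is a Nijenhuis operator on the semidirect product algebra A ⋉ M. -/
/-- A map `N` is a Nijenhuis operator for the multiplication `mul`. -/
def IsNijenhuisOp {A : Type*} [AddCommGroup A] (mul : A → A → A) (N : A → A) : Prop :=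
  ∀ a b, mul (N a) (N b) = N (mul (N a) b + mul a (N b) - N (mul a b))

/-- Associativity of a multiplication. -/
def IsAssocMul {A : Type*} (mul : A → A → A) : Prop :=
  ∀ a b c, mul (mul a b) c = mul a (mul b c)

/-- Bimodule axioms for left action `l` and right action `r` over the product `mul`. -/
def IsBimod {A M : Type*} [AddCommGroup A] [AddCommGroup M]
    (mul : A → A → A) (l : A → M → M) (r : M → A → M) : Prop :=
  (∀ a b u, l (mul a b) u = l a (l b u)) ∧
  (∀ a b u, r (l a u) b = l a (r u b)) ∧
  (∀ a b u, r (r u a) b = r u (mul a b))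

/-- A linear map `R : M → A` is a relative Rota-Baxter operator, i.e.
`R(u)·R(v) = R(R(u)▷v + u◁R(v))` for all `u, v ∈ M`, if and only if its lift
`R̃ : A ⊕ M → A ⊕ M`, `R̃(a,u) = (R u, 0)`, is a Nijenhuis operator on the semidirect
product algebra `A ⋉ M`. -/
theorem relRotaBaxter_iff_lift_isNijenhuisOp {k A M : Type*} [Field k] [CharZero k]
    [AddCommGroup A] [Module k A] [AddCommGroup M] [Module k M]
    (mul : A →ₗ[k] A →ₗ[k] A) (hassoc : IsAssocMul fun a b => mul a b)
    (l : A →ₗ[k] M →ₗ[k] M) (r : M →ₗ[k] A →ₗ[k] M)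
    (hbm : IsBimod (fun a b => mul a b) (fun a u => l a u) (fun u a => r u a))
    (R : M →ₗ[k] A) :
    (∀ u v : M, mul (R u) (R v) = R (l (R u) v + r u (R v))) ↔
      IsNijenhuisOp
        (fun p q : A × M => (mul p.1 q.1, l p.1 q.2 + r p.2 q.1))
        (fun p : A × M => (R p.2, (0 : M))) := by
  constructor
  · intro h p q
    obtain ⟨a, u⟩ := p
    obtain ⟨b, v⟩ := q
    simp only [IsNijenhuisOp, Prod.mk.injEq, Prod.fst_add, Prod.snd_add, Prod.fst_sub,
      Prod.snd_sub, map_add, map_sub, map_zero, LinearMap.add_apply, LinearMap.sub_apply,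
      LinearMap.zero_apply, LinearMap.map_zero]
    constructor
    · rw [h u v]; simp [map_add, map_sub]
    · abel_nf
  · intro h u v
    have := h (0, u) (0, v)
    simp only [Prod.mk.injEq, map_zero, LinearMap.zero_apply, LinearMap.map_zero,
      add_zero, zero_add, sub_zero] at this
    have h1 := this.1
    simpa [map_add, map_sub] using h1
end

section
/- Let N be a Nijenhuis operator on an associative algebra (A,·). Then N is also a Nijenhuis operator on the deformed algebra (A, ·_N), where a ·_N b = N(a)·b + a·N(b) - N(a·b). Moreover, the deformation of ·_N by N equals the deformation of · by N². -/
/-- The product deformed by `N`: `a ·_N b = N(a)·b + a·N(b) - N(a·b)`. -/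
def defMul {A : Type*} [AddCommGroup A] (mul : A → A → A) (N : A → A) (a b : A) : A :=
  mul (N a) b + mul a (N b) - N (mul a b)

/-- If `N` is a Nijenhuis operator on an associative algebra `(A, ·)`, then `N` is also a
Nijenhuis operator on the deformed algebra `(A, ·_N)`; moreover the deformation of `·_N`
by `N` coincides with the deformation of `·` by `N² = N ∘ N`. -/
theorem nijenhuis_on_deformed_and_square {k A : Type*} [Field k] [CharZero k]
    [AddCommGroup A] [Module k A]
    (mul : A →ₗ[k] A →ₗ[k] A) (hassoc : IsAssocMul fun a b => mul a b)
    (N : A →ₗ[k] A) (hN : IsNijenhuisOp (fun a b => mul a b) N) :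
    IsNijenhuisOp (defMul (fun a b => mul a b) N) N ∧
      (∀ a b, defMul (defMul (fun a b => mul a b) N) N a b
        = defMul (fun a b => mul a b) (N ∘ₗ N) a b) := by
  have hN' : ∀ a b, mul (N a) (N b)
      = N (mul (N a) b + mul a (N b) - N (mul a b)) := fun a b => hN a b
  have hsq : ∀ a b, defMul (defMul (fun a b => mul a b) N) N a b
      = defMul (fun a b => mul a b) (N ∘ₗ N) a b := by
    intro a b
    simp only [defMul, LinearMap.comp_apply, map_add, map_sub]
    rw [hN' a b]
    simp only [map_add, map_sub]
    abel
  refine ⟨?_, hsq⟩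
  intro a b
  show defMul (fun a b => mul a b) N (N a) (N b) = N (defMul (defMul (fun a b => mul a b) N) N a b)
  rw [hsq a b]
  simp only [defMul, LinearMap.comp_apply]
  rw [hN' (N a) b, hN' a (N b), hN' a b]
  simp only [map_add, map_sub]
  abel
end

section
/- Let N be a Nijenhuis operator on an associative algebra (A,·). Then for every k ≥ 0, the power N^k is also a Nijenhuis operator on (A,·). -/
section Aux

variable {k A : Type*} [Field k] [CharZero k] [AddCommGroup A] [Module k A]
  (mul : A →ₗ[k] A →ₗ[k] A) (N : A →ₗ[k] A)

lemma nijenhuis_aux_L (hN : IsNijenhuisOp (fun a b => mul a b) N) (q : ℕ) (a b : A) :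
    mul (N a) ((N ^ q) b) =
      N (mul a ((N ^ q) b)) + (N ^ q) (mul (N a) b - N (mul a b)) := by
  induction q generalizing a b with
  | zero => simp only [pow_zero, Module.End.one_apply]; abel
  | succ q ih =>
    rw [pow_succ' N q]
    simp only [Module.End.mul_apply]
    have key := hN a ((N ^ q) b)
    simp only at key
    rw [key, ← map_add]
    congr 1
    rw [ih a b]
    abel

lemma nijenhuis_aux_C (hN : IsNijenhuisOp (fun a b => mul a b) N) (p q : ℕ) (a b : A) :
    mul ((N ^ p) a) ((N ^ q) b) =
      (N ^ q) (mul ((N ^ p) a) b) + (N ^ p) (mul a ((N ^ q) b))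
        - (N ^ p) ((N ^ q) (mul a b)) := by
  have comm : ∀ m : ℕ, ∀ x : A, N ((N ^ m) x) = (N ^ m) (N x) := by
    intro m x
    rw [← Module.End.mul_apply, ← pow_succ', pow_succ, Module.End.mul_apply]
  induction p generalizing a b with
  | zero => simp only [pow_zero, Module.End.one_apply]; abel
  | succ p ih =>
    rw [pow_succ' N p]
    simp only [Module.End.mul_apply]
    rw [nijenhuis_aux_L mul N hN q ((N ^ p) a) b, ih a b]
    simp only [map_add, map_sub, comm]
    abel

end Aux

/-- If `N` is a Nijenhuis operator on an associative algebra `(A, ·)`, then for every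
`n ≥ 0` the power `N ^ n` is also a Nijenhuis operator on `(A, ·)`. -/
theorem pow_isNijenhuisOp {k A : Type*} [Field k] [CharZero k]
    [AddCommGroup A] [Module k A]
    (mul : A →ₗ[k] A →ₗ[k] A) (hassoc : IsAssocMul fun a b => mul a b)
    (N : A →ₗ[k] A) (hN : IsNijenhuisOp (fun a b => mul a b) N) :
    ∀ n : ℕ, IsNijenhuisOp (fun a b => mul a b) ⇑(N ^ n) := by
  intro n a b
  simp only
  rw [nijenhuis_aux_C mul N hN n n a b]
  simp only [map_add, map_sub]
end

section
/- Let (A,·,Δ) be a dendriform-Nijenhuis bialgebra. Then the map N : End(A) → End(A) defined by N(f)(a) = a₍₁₎ · f(a₍₂₎) (Sweedler notation Δ(a) = a₍₁₎ ⊗ a₍₂₎) is a Nijenhuis operator on the associative algebra (End(A), ∘) under composition. -/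
open TensorProduct

/-- `map p q (map p' q' v) = map (p ∘ p') (q ∘ q') v`, elementwise. -/
theorem TP_map_map_apply {R : Type*} [CommSemiring R]
    {M N P Q M' N' : Type*}
    [AddCommMonoid M] [AddCommMonoid N] [AddCommMonoid P] [AddCommMonoid Q]
    [AddCommMonoid M'] [AddCommMonoid N']
    [Module R M] [Module R N] [Module R P] [Module R Q] [Module R M'] [Module R N']
    (p : P →ₗ[R] M') (p' : M →ₗ[R] P) (q : Q →ₗ[R] N') (q' : N →ₗ[R] Q)
    (v : M ⊗[R] N) :
    TensorProduct.map p q (TensorProduct.map p' q' v)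
      = TensorProduct.map (p ∘ₗ p') (q ∘ₗ q') v := by
  rw [← LinearMap.comp_apply, ← TensorProduct.map_comp]

/-- Let `(A, ·, Δ)` be a dendriform-Nijenhuis bialgebra: `(A, ·)` associative, `(A, Δ)`
coassociative, with compatibility `Δ(a·b) = a₍₁₎ ⊗ a₍₂₎·b + a·b₍₁₎ ⊗ b₍₂₎ - a₍₁₎·a₍₂₎ ⊗ b`.
Then `N : End(A) → End(A)`, `N(f)(a) = a₍₁₎ · f(a₍₂₎)`, is a Nijenhuis operator on the
associative algebra `(End(A), ∘)`: `N(f) ∘ N(g) = N(N(f)∘g + f∘N(g) - N(f∘g))`. -/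
theorem dendriformNijenhuis_endo_isNijenhuis {k A : Type*} [Field k] [CharZero k]
    [AddCommGroup A] [Module k A]
    (mul : A →ₗ[k] A →ₗ[k] A)
    (hassoc : ∀ a b c : A, mul (mul a b) c = mul a (mul b c))
    (Δ : A →ₗ[k] A ⊗[k] A)
    (hcoassoc : (TensorProduct.assoc k A A A).toLinearMap ∘ₗ
        (TensorProduct.map Δ LinearMap.id) ∘ₗ Δ = (TensorProduct.map LinearMap.id Δ) ∘ₗ Δ)
    (hcompat : ∀ a b : A,
      Δ (mul a b) =
        (TensorProduct.map LinearMap.id (mul.flip b)) (Δ a)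
          + (TensorProduct.map (mul a) LinearMap.id) (Δ b)
          - (TensorProduct.lift mul (Δ a)) ⊗ₜ[k] b)
    (N : (A →ₗ[k] A) → (A →ₗ[k] A))
    (hNdef : ∀ f : A →ₗ[k] A,
      N f = (TensorProduct.lift mul) ∘ₗ (TensorProduct.map LinearMap.id f) ∘ₗ Δ) :
    ∀ f g : A →ₗ[k] A,
      (N f) ∘ₗ (N g) = N ((N f) ∘ₗ g + f ∘ₗ (N g) - N (f ∘ₗ g)) := by
  intro f g
  -- notation
  let m : A ⊗[k] A →ₗ[k] A := TensorProduct.lift mul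
  let I : A →ₗ[k] A := LinearMap.id
  let J : A ⊗[k] A →ₗ[k] A ⊗[k] A := LinearMap.id
  let α := TensorProduct.assoc k A A A
  -- associativity at the level of triple tensors
  have hassoc3 : ∀ u : (A ⊗[k] A) ⊗[k] A,
      m (TensorProduct.map m I u) = m (TensorProduct.map I m (α u)) := by
    intro u
    induction u using TensorProduct.induction_on with
    | zero => simp
    | tmul s z =>
        induction s using TensorProduct.induction_on with
        | zero => simp
        | tmul x y => simp [m, I, α, hassoc]
        | add s₁ s₂ h1 h2 =>
            simp only [add_tmul, map_add, LinearEquiv.map_add] at *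
            rw [h1, h2]
    | add u v hu hv =>
        simp only [map_add, LinearEquiv.map_add] at *
        rw [hu, hv]
  have A1 : ∀ (y : A) (s : A ⊗[k] A),
      TensorProduct.map I m (α (s ⊗ₜ[k] y))
        = TensorProduct.map I (mul.flip y) s := by
    intro y s
    induction s using TensorProduct.induction_on with
    | zero => simp
    | tmul x z => simp [m, I, α]
    | add s₁ s₂ h1 h2 =>
        simp only [add_tmul, map_add, LinearEquiv.map_add] at *
        rw [h1, h2]
  have A2 : ∀ (x : A) (s : A ⊗[k] A),
      TensorProduct.map m I (α.symm (x ⊗ₜ[k] s))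
        = TensorProduct.map (mul x) I s := by
    intro x s
    induction s using TensorProduct.induction_on with
    | zero => simp
    | tmul y z => simp [m, I, α, TensorProduct.assoc_symm_tmul]
    | add s₁ s₂ h1 h2 =>
        simp only [tmul_add, map_add, LinearEquiv.map_add] at *
        rw [h1, h2]
  -- the compatibility relation, extended to all of A ⊗ A
  have K : ∀ t : A ⊗[k] A,
      Δ (m t) = TensorProduct.map I m (α (TensorProduct.map Δ I t))
        + TensorProduct.map m I (α.symm (TensorProduct.map I Δ t))
        - TensorProduct.map (m ∘ₗ Δ) I t := by
    intro t
    induction t using TensorProduct.induction_on with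
    | zero => simp
    | tmul x y =>
        simp only [TensorProduct.map_tmul, LinearMap.id_coe, id_eq, LinearMap.comp_apply, I]
        rw [show m (x ⊗ₜ[k] y) = mul x y from rfl, hcompat x y, A1 y (Δ x), A2 x (Δ y)]
    | add u v hu hv =>
        simp only [map_add, LinearEquiv.map_add] at *
        rw [hu, hv]
        abel
  -- splitting of `map id` over sums and differences in the second slot
  have hsplit : ∀ (p q r : A →ₗ[k] A) (v : A ⊗[k] A),
      TensorProduct.map I (p + q - r) v
        = TensorProduct.map I p v + TensorProduct.map I q v - TensorProduct.map I r v := by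
    intro p q r v
    induction v using TensorProduct.induction_on with
    | zero => simp
    | tmul x y =>
        simp [TensorProduct.tmul_add, TensorProduct.tmul_sub]
    | add u v hu hv =>
        simp only [map_add] at *
        rw [hu, hv]
        abel
  -- naturality of the associator
  have natg : ∀ (h : A →ₗ[k] A) (u : (A ⊗[k] A) ⊗[k] A),
      α (TensorProduct.map J h u)
        = TensorProduct.map I (TensorProduct.map I h) (α u) := by
    intro h u
    have := TensorProduct.map_map_assoc (LinearMap.id : A →ₗ[k] A)
      (LinearMap.id : A →ₗ[k] A) h u
    simpa [TensorProduct.map_id, I, J, α] using this.symm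
  have natf : ∀ (h : A →ₗ[k] A) (v : A ⊗[k] (A ⊗[k] A)),
      TensorProduct.map J h (α.symm v)
        = α.symm (TensorProduct.map I (TensorProduct.map I h) v) := by
    intro h v
    have := TensorProduct.map_map_assoc_symm (LinearMap.id : A →ₗ[k] A)
      (LinearMap.id : A →ₗ[k] A) h v
    simpa [TensorProduct.map_id, I, J, α] using this
  -- main computation
  rw [hNdef (f ∘ₗ g), hNdef f, hNdef g, hNdef]
  ext a
  simp only [LinearMap.comp_apply]
  set t := Δ a with ht
  have hw : α (TensorProduct.map Δ I t) = TensorProduct.map I Δ t := by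
    simpa [α, I, LinearMap.comp_apply] using LinearMap.congr_fun hcoassoc a
  rw [K (TensorProduct.map I g t)]
  rw [hsplit]
  simp only [map_add, map_sub]
  -- term 1
  have c1 : TensorProduct.map Δ I (TensorProduct.map I g t)
      = TensorProduct.map J g (TensorProduct.map Δ I t) := by
    rw [TP_map_map_apply, TP_map_map_apply]
    simp [I, J]
  have e1 : m (TensorProduct.map I f (TensorProduct.map I m
        (α (TensorProduct.map Δ I (TensorProduct.map I g t)))))
      = m (TensorProduct.map I (f ∘ₗ (m ∘ₗ TensorProduct.map I g ∘ₗ Δ)) t) := by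
    rw [c1, natg g, hw]
    simp only [TP_map_map_apply]
    simp [I]
  -- term 2
  have c2 : TensorProduct.map I Δ (TensorProduct.map I g t)
      = TensorProduct.map I (Δ ∘ₗ g) t := by
    rw [TP_map_map_apply]; simp [I]
  have e2 : m (TensorProduct.map I f (TensorProduct.map m I
        (α.symm (TensorProduct.map I Δ (TensorProduct.map I g t)))))
      = m (TensorProduct.map I ((m ∘ₗ TensorProduct.map I f ∘ₗ Δ) ∘ₗ g) t) := by
    rw [c2]
    have step1 : TensorProduct.map I f (TensorProduct.map m I
          (α.symm (TensorProduct.map I (Δ ∘ₗ g) t)))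
        = TensorProduct.map m I (TensorProduct.map J f
            (α.symm (TensorProduct.map I (Δ ∘ₗ g) t))) := by
      rw [TP_map_map_apply, TP_map_map_apply]
      simp [I, J]
    rw [step1, natf f, TP_map_map_apply, hassoc3, LinearEquiv.apply_symm_apply,
      TP_map_map_apply]
    simp [I, LinearMap.comp_assoc]
  -- term 3
  have e3 : m (TensorProduct.map I f (TensorProduct.map (m ∘ₗ Δ) I
        (TensorProduct.map I g t)))
      = m (TensorProduct.map I (m ∘ₗ TensorProduct.map I (f ∘ₗ g) ∘ₗ Δ) t) := by
    have c3 : TensorProduct.map I f (TensorProduct.map (m ∘ₗ Δ) I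
          (TensorProduct.map I g t))
        = TensorProduct.map m I (TensorProduct.map J (f ∘ₗ g)
            (TensorProduct.map Δ I t)) := by
      simp only [TP_map_map_apply]
      simp [I, J]
    rw [c3, hassoc3, natg (f ∘ₗ g), hw]
    simp only [TP_map_map_apply]
    simp [I]
  rw [e1, e2, e3]
  abel
end

section
/- Let N be a Nijenhuis operator on an associative algebra (A,·). Then the operations a ≺ b := a·N(b), a ≻ b := N(a)·b, a ⋎ b := -N(a·b) make A into an NS-algebra, and the total product a≺b + a≻b + a⋎b equals the deformed product a ·_N b. -/
/-- The NS-algebra axioms for three operations `≺ = p`, `≻ = s`, `⋎ = v`, with total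
product `a ∗ b = a≺b + a≻b + a⋎b`. -/
def IsNS {A : Type*} [AddCommGroup A] (p s v : A → A → A) : Prop :=
  (∀ a b c, p (p a b) c = p a (p b c + s b c + v b c)) ∧
  (∀ a b c, p (s a b) c = s a (p b c)) ∧
  (∀ a b c, s (p a b + s a b + v a b) c = s a (s b c)) ∧
  (∀ a b c, v (p a b + s a b + v a b) c + p (v a b) c
      = s a (v b c) + v a (p b c + s b c + v b c))

/-- If `N` is a Nijenhuis operator on an associative algebra `(A, ·)`, then
`a ≺ b := a·N(b)`, `a ≻ b := N(a)·b`, `a ⋎ b := -N(a·b)` make `A` an NS-algebra, whose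
total product `a≺b + a≻b + a⋎b` equals the deformed product `a ·_N b`. -/
theorem nijenhuis_induces_NS {k A : Type*} [Field k] [CharZero k]
    [AddCommGroup A] [Module k A]
    (mul : A →ₗ[k] A →ₗ[k] A) (hassoc : IsAssocMul fun a b => mul a b)
    (N : A →ₗ[k] A) (hN : IsNijenhuisOp (fun a b => mul a b) N) :
    IsNS (fun a b => mul a (N b)) (fun a b => mul (N a) b) (fun a b => -N (mul a b)) ∧
      (∀ a b : A, mul a (N b) + mul (N a) b + -N (mul a b)
        = defMul (fun a b => mul a b) N a b) := by

  have H : ∀ a b c : A, mul (mul a b) c = mul a (mul b c) := hassoc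
  have hN' : ∀ a b : A, mul (N a) (N b)
      = N (mul (N a) b + mul a (N b) - N (mul a b)) := hN
  constructor
  · refine ⟨?_, ?_, ?_, ?_⟩
    · intro a b c
      simp only
      rw [show mul b (N c) + mul (N b) c + -N (mul b c)
          = mul (N b) c + mul b (N c) - N (mul b c) by abel, ← hN' b c]
      exact H a (N b) (N c)
    · intro a b c
      exact H (N a) b (N c)
    · intro a b c
      simp only
      rw [show mul a (N b) + mul (N a) b + -N (mul a b)
          = mul (N a) b + mul a (N b) - N (mul a b) by abel, ← hN' a b]
      exact H (N a) (N b) c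
    · intro a b c
      simp only
      have h1 := hN' (mul a b) c
      have h2 := hN' a (mul b c)
      simp only [map_add, map_sub, map_neg, LinearMap.add_apply, LinearMap.sub_apply,
        LinearMap.neg_apply, LinearMap.map_add, LinearMap.map_sub, LinearMap.map_neg,
        H, h1, h2] at *
      abel
  · intro a b
    simp only [defMul]
    abel
end

section
/- Let N be a Nijenhuis operator on an associative algebra (A,·). For a linear map N' : A → A, the sum N + N' is also a Nijenhuis operator if and only if N' satisfies d_N(N') + ½[N',N']_FN = 0, i.e. N' is a Maurer-Cartan element of the dgLa (⊕ₙ Hom(A⊗ⁿ, A), [·,·]_FN, d_N). -/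
/-- The Hochschild coboundary of a 1-cochain `f`:
`(δf)(a,b) = a·f(b) - f(a·b) + f(a)·b`. -/
def hochD {A : Type*} [AddCommGroup A] (mul : A → A → A) (f : A → A) (a b : A) : A :=
  mul a (f b) - f (mul a b) + mul (f a) b

/-- The Fröhlicher-Nijenhuis bracket of two 1-cochains `f, g : A → A`:
`[f,g]_FN = [f,g]_⌣ - i_{δf} g - i_{δg} f = f(a)·g(b) + g(a)·f(b) - g(δf(a,b)) - f(δg(a,b))`. -/
def fnBracket1 {A : Type*} [AddCommGroup A] (mul : A → A → A) (f g : A → A) (a b : A) : A :=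
  mul (f a) (g b) + mul (g a) (f b) - g (hochD mul f a b) - f (hochD mul g a b)

/-- Let `N` be a Nijenhuis operator on an associative algebra `(A, ·)`.  For a linear map
`N' : A → A`, the sum `N + N'` is a Nijenhuis operator if and only if `N'` is a
Maurer-Cartan element of the dgLa `(⊕ₙ Hom(A⊗ⁿ, A), [·,·]_FN, d_N)`, i.e.
`d_N(N') + ½ [N', N']_FN = 0`, where `d_N(N') = [N, N']_FN`. -/
theorem add_isNijenhuis_iff_maurerCartan {k A : Type*} [Field k] [CharZero k]
    [AddCommGroup A] [Module k A]
    (mul : A →ₗ[k] A →ₗ[k] A) (hassoc : IsAssocMul fun a b => mul a b)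
    (N : A →ₗ[k] A) (hN : IsNijenhuisOp (fun a b => mul a b) N)
    (N' : A →ₗ[k] A) :
    IsNijenhuisOp (fun a b => mul a b) ⇑(N + N') ↔
      ∀ a b : A,
        fnBracket1 (fun a b => mul a b) N N' a b
          + (2⁻¹ : k) • fnBracket1 (fun a b => mul a b) N' N' a b = 0 := by
  have hN' : ∀ a b : A, mul (N a) (N b)
      = N (mul (N a) b) + N (mul a (N b)) - N (N (mul a b)) := by
    intro a b
    simpa [map_add, map_sub] using hN a b
  have key : ∀ a b : A,
      fnBracket1 (fun a b => mul a b) N N' a b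
          + (2⁻¹ : k) • fnBracket1 (fun a b => mul a b) N' N' a b
        = mul ((N + N') a) ((N + N') b)
            - (N + N') (mul ((N + N') a) b + mul a ((N + N') b)
                - (N + N') (mul a b)) := by
    intro a b
    simp only [fnBracket1, hochD, LinearMap.add_apply, map_add, map_sub,
      LinearMap.sub_apply]
    rw [hN']
    module
  constructor
  · intro h a b
    rw [key a b]
    exact sub_eq_zero.mpr (h a b)
  · intro h a b
    have := h a b
    rw [key a b] at this
    exact (sub_eq_zero.mp this)
end

section
/- Let ((A,·),N) be a Nijenhuis algebra and ((M,▷,◁),N_M) a Nijenhuis bimodule over it. Then the operations a ▷' u := N(a)▷u + a▷N_M(u) - N_M(a▷u) and u ◁' a := N_M(u)◁a + u◁N(a) - N_M(u◁a) make M into a bimodule over the deformed associative algebra A_N = (A, ·_N). -/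
/-- The Nijenhuis bimodule conditions for `(N, N_M)` relative to actions `(l, r)`. -/
def IsNijBimodPair {A M : Type*} [AddCommGroup A] [AddCommGroup M]
    (l : A → M → M) (r : M → A → M) (N : A → A) (NM : M → M) : Prop :=
  (∀ a u, l (N a) (NM u) = NM (l (N a) u + l a (NM u) - NM (l a u))) ∧
  (∀ a u, r (NM u) (N a) = NM (r (NM u) a + r u (N a) - NM (r u a)))

/-- Let `((A,·),N)` be a Nijenhuis algebra and `((M,▷,◁),N_M)` a Nijenhuis bimodule over
it.  Then `a ▷' u := N(a)▷u + a▷N_M(u) - N_M(a▷u)` and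
`u ◁' a := N_M(u)◁a + u◁N(a) - N_M(u◁a)` make `M` a bimodule over the deformed algebra
`A_N = (A, ·_N)`. -/
theorem deformed_actions_bimodule {k A M : Type*} [Field k] [CharZero k]
    [AddCommGroup A] [Module k A] [AddCommGroup M] [Module k M]
    (mul : A →ₗ[k] A →ₗ[k] A) (hassoc : IsAssocMul fun a b => mul a b)
    (N : A →ₗ[k] A) (hN : IsNijenhuisOp (fun a b => mul a b) N)
    (l : A →ₗ[k] M →ₗ[k] M) (r : M →ₗ[k] A →ₗ[k] M)
    (hbm : IsBimod (fun a b => mul a b) (fun a u => l a u) (fun u a => r u a))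
    (NM : M →ₗ[k] M)
    (hnb : IsNijBimodPair (fun a u => l a u) (fun u a => r u a) N NM) :
    IsBimod (defMul (fun a b => mul a b) N)
      (fun a u => l (N a) u + l a (NM u) - NM (l a u))
      (fun u a => r (NM u) a + r u (N a) - NM (r u a)) := by
  simp only [IsNijenhuisOp] at hN
  simp only [IsBimod] at hbm ⊢
  simp only [IsNijBimodPair] at hnb
  obtain ⟨h1, h2, h3⟩ := hbm
  obtain ⟨hl, hr⟩ := hnb
  have hN2 : ∀ a b, N (N (mul a b)) =
      N (mul (N a) b) + N (mul a (N b)) - mul (N a) (N b) := by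
    intro a b
    have h := hN a b
    simp only [map_add, map_sub] at h
    rw [h]; abel
  refine ⟨fun a b u => ?_, fun a b u => ?_, fun a b u => ?_⟩
  · simp only [defMul, map_add, map_sub, LinearMap.add_apply, LinearMap.sub_apply,
      h1, h2, h3, hl, hr, hN2]
    abel
  · have e := congrArg (fun x => (r x) b) (hl a u).symm
    simp only [map_add, map_sub, LinearMap.add_apply, LinearMap.sub_apply, h2] at e
    simp only [defMul, map_add, map_sub, LinearMap.add_apply, LinearMap.sub_apply,
      h1, h2, h3, hl, hr, hN2]
    rw [← sub_eq_zero] at e ⊢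
    rw [← e]
    abel
  · have e := congrArg (fun x => (r x) b) (hr a u).symm
    simp only [map_add, map_sub, LinearMap.add_apply, LinearMap.sub_apply, h3] at e
    simp only [defMul, map_add, map_sub, LinearMap.add_apply, LinearMap.sub_apply,
      h1, h2, h3, hl, hr, hN2]
    rw [← sub_eq_zero] at e ⊢
    rw [← e]
    abel
end

section
/- Let ((A,·),N) be a Nijenhuis algebra and ((M,▷,◁),N_M) a Nijenhuis bimodule over it. Then the semidirect product algebra A ⋉ M with multiplication (a,u)·(b,v) = (a·b, a▷v + u◁b), equipped with the map N ⊕ N_M, is a Nijenhuis algebra. -/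
/-- Let `((A,·),N)` be a Nijenhuis algebra and `((M,▷,◁),N_M)` a Nijenhuis bimodule over
it.  Then the semidirect product `A ⋉ M` with `(a,u)·(b,v) = (a·b, a▷v + u◁b)`, together
with `N ⊕ N_M`, is a Nijenhuis algebra. -/
theorem semidirect_nijenhuis_algebra {k A M : Type*} [Field k] [CharZero k]
    [AddCommGroup A] [Module k A] [AddCommGroup M] [Module k M]
    (mul : A →ₗ[k] A →ₗ[k] A) (hassoc : IsAssocMul fun a b => mul a b)
    (N : A →ₗ[k] A) (hN : IsNijenhuisOp (fun a b => mul a b) N)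
    (l : A →ₗ[k] M →ₗ[k] M) (r : M →ₗ[k] A →ₗ[k] M)
    (hbm : IsBimod (fun a b => mul a b) (fun a u => l a u) (fun u a => r u a))
    (NM : M →ₗ[k] M)
    (hnb : IsNijBimodPair (fun a u => l a u) (fun u a => r u a) N NM) :
    IsAssocMul (fun p q : A × M => (mul p.1 q.1, l p.1 q.2 + r p.2 q.1)) ∧
      IsNijenhuisOp (fun p q : A × M => (mul p.1 q.1, l p.1 q.2 + r p.2 q.1))
        (fun p : A × M => (N p.1, NM p.2)) := by

  obtain ⟨hl, hlr, hr⟩ := hbm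
  obtain ⟨hnl, hnr⟩ := hnb
  simp only [] at hl hlr hr hnl hnr
  constructor
  · rintro ⟨a,u⟩ ⟨b,v⟩ ⟨c,w⟩
    refine Prod.ext (hassoc a b c) ?_
    simp only [map_add, LinearMap.add_apply]
    rw [hl a b w, hlr a c v, hr b c u]
    abel
  · rintro ⟨a,u⟩ ⟨b,v⟩
    refine Prod.ext (hN a b) ?_
    simp only [Prod.mk_add_mk, Prod.mk_sub_mk, map_add, map_sub, LinearMap.add_apply, LinearMap.sub_apply]
    rw [hnl a v, hnr b u]
    simp only [map_add, map_sub]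
    abel
end

section
/- Let ((A,·),N) be a Nijenhuis algebra, (M,▷,◁) an A-bimodule, and β : M → M an admissible linear map for this bimodule. Then the dual module M* with actions (a ▷* f)(u) = f(u◁a), (f ◁* a)(u) = f(a▷u), together with the dual map β*, is a Nijenhuis bimodule over ((A,·),N). -/
/-- Let `((A,·),N)` be a Nijenhuis algebra, `(M,▷,◁)` an `A`-bimodule and `β : M → M` an
admissible linear map.  Then the dual module `M*` with actions `(a ▷* f)(u) = f(u ◁ a)`,
`(f ◁* a)(u) = f(a ▷ u)`, together with the dual map `β*`, is a Nijenhuis bimodule over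
`((A,·),N)`. -/
theorem dual_nijenhuis_bimodule {k A M : Type*} [Field k] [CharZero k]
    [AddCommGroup A] [Module k A] [AddCommGroup M] [Module k M]
    (mul : A →ₗ[k] A →ₗ[k] A) (hassoc : IsAssocMul fun a b => mul a b)
    (N : A →ₗ[k] A) (hN : IsNijenhuisOp (fun a b => mul a b) N)
    (l : A →ₗ[k] M →ₗ[k] M) (r : M →ₗ[k] A →ₗ[k] M)
    (hbm : IsBimod (fun a b => mul a b) (fun a u => l a u) (fun u a => r u a))
    (β : M →ₗ[k] M)
    (hadm1 : ∀ (a : A) (u : M),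
      β (l (N a) u) + l a (β (β u)) = l (N a) (β u) + β (l a (β u)))
    (hadm2 : ∀ (a : A) (u : M),
      β (r u (N a)) + r (β (β u)) a = r (β u) (N a) + β (r (β u) a)) :
    IsBimod (fun a b => mul a b)
        (fun (a : A) (f : Module.Dual k M) => f ∘ₗ (r.flip a))
        (fun (f : Module.Dual k M) (a : A) => f ∘ₗ (l a)) ∧
      IsNijBimodPair
        (fun (a : A) (f : Module.Dual k M) => f ∘ₗ (r.flip a))
        (fun (f : Module.Dual k M) (a : A) => f ∘ₗ (l a))
        N (fun f : Module.Dual k M => f ∘ₗ β) := by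
  obtain ⟨h1, h2, h3⟩ := hbm
  refine ⟨⟨?_, ?_, ?_⟩, ?_, ?_⟩
  · intro a b f; ext u
    simp [h3 a b u]
  · intro a b f; ext u
    simp [h2 b a u]
  · intro a b f; ext u
    simp [h1 a b u]
  · intro a f; ext u
    simp only [LinearMap.comp_apply, LinearMap.flip_apply, LinearMap.sub_apply,
      LinearMap.add_apply, map_add, map_sub]
    have : β (r u (N a)) = r (β u) (N a) + β (r (β u) a) - r (β (β u)) a := by
      rw [eq_sub_iff_add_eq]; exact hadm2 a u
    rw [this]; simp [map_add, map_sub]; all_goals abel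
  · intro a f; ext u
    simp only [LinearMap.comp_apply, LinearMap.flip_apply, LinearMap.sub_apply,
      LinearMap.add_apply, map_add, map_sub]
    have : β (l (N a) u) = l (N a) (β u) + β (l a (β u)) - l a (β (β u)) := by
      rw [eq_sub_iff_add_eq]; exact hadm1 a u
    rw [this]; simp [map_add, map_sub]; all_goals abel
end

section
/- Let ((A,·),R) be a Rota-Baxter algebra and ((M,▷,◁),R_M) a Rota-Baxter bimodule over it. Then ((M ⊕ M, ▷⋉, ◁⋉), R̃_M) with actions (a,b)▷⋉(u,v) = (a▷u, a▷v + b▷u), (u,v)◁⋉(a,b) = (u◁a, u◁b + v◁a) and R̃_M(u,v) = (R_M(v), 0), is a Nijenhuis bimodule over the Nijenhuis algebra ((A ⊕ A, ·⋉), R̃), where (a,b)·⋉(c,d) = (a·c, a·d + b·c) and R̃(a,b) = (R(b),0). -/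
/-- Lifting of Rota-Baxter bimodules: if `((A,·),R)` is a Rota-Baxter algebra and
`((M,▷,◁),R_M)` a Rota-Baxter bimodule over it, then `(M ⊕ M, ▷⋉, ◁⋉)` with
`R̃_M(u,v) = (R_M v, 0)` is a Nijenhuis bimodule over the Nijenhuis algebra
`((A ⊕ A, ·⋉), R̃)`, where `(a,b)·⋉(c,d) = (a·c, a·d + b·c)` and `R̃(a,b) = (R b, 0)`. -/
theorem rotaBaxter_bimodule_lifts_to_nijenhuis_bimodule {k A M : Type*}
    [Field k] [CharZero k]
    [AddCommGroup A] [Module k A] [AddCommGroup M] [Module k M]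
    (mul : A →ₗ[k] A →ₗ[k] A) (hassoc : IsAssocMul fun a b => mul a b)
    (R : A →ₗ[k] A)
    (hR : ∀ a b : A, mul (R a) (R b) = R (mul (R a) b + mul a (R b)))
    (l : A →ₗ[k] M →ₗ[k] M) (r : M →ₗ[k] A →ₗ[k] M)
    (hbm : IsBimod (fun a b => mul a b) (fun a u => l a u) (fun u a => r u a))
    (RM : M →ₗ[k] M)
    (hRM1 : ∀ (a : A) (u : M), l (R a) (RM u) = RM (l (R a) u + l a (RM u)))
    (hRM2 : ∀ (a : A) (u : M), r (RM u) (R a) = RM (r (RM u) a + r u (R a))) :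
    IsAssocMul (fun p q : A × A => (mul p.1 q.1, mul p.1 q.2 + mul p.2 q.1)) ∧
    IsNijenhuisOp (fun p q : A × A => (mul p.1 q.1, mul p.1 q.2 + mul p.2 q.1))
      (fun p : A × A => (R p.2, (0 : A))) ∧
    IsBimod (fun p q : A × A => (mul p.1 q.1, mul p.1 q.2 + mul p.2 q.1))
      (fun (p : A × A) (u : M × M) => (l p.1 u.1, l p.1 u.2 + l p.2 u.1))
      (fun (u : M × M) (p : A × A) => (r u.1 p.1, r u.1 p.2 + r u.2 p.1)) ∧
    IsNijBimodPair
      (fun (p : A × A) (u : M × M) => (l p.1 u.1, l p.1 u.2 + l p.2 u.1))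
      (fun (u : M × M) (p : A × A) => (r u.1 p.1, r u.1 p.2 + r u.2 p.1))
      (fun p : A × A => (R p.2, (0 : A)))
      (fun u : M × M => (RM u.2, (0 : M))) := by
  obtain ⟨h1', h2', h3'⟩ := hbm
  have h1 : ∀ a b u, l (mul a b) u = l a (l b u) := h1'
  have h2 : ∀ a b u, r (l a u) b = l a (r u b) := h2'
  have h3 : ∀ a b u, r (r u a) b = r u (mul a b) := h3'
  have ha : ∀ a b c, mul (mul a b) c = mul a (mul b c) := hassoc
  refine ⟨?_, ?_, ⟨?_, ?_, ?_⟩, ?_, ?_⟩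
  · intro a b c
    simp only [Prod.mk.injEq, map_add, LinearMap.add_apply]
    refine ⟨ha _ _ _, ?_⟩
    simp only [ha]; abel
  · intro a b
    simp only [Prod.mk.injEq, map_add, map_sub, map_zero, LinearMap.zero_apply,
      LinearMap.map_zero, Prod.fst_add, Prod.snd_add, Prod.fst_sub, Prod.snd_sub]
    constructor
    · rw [hR]; abel_nf; rw [map_add]
    · simp
  · intro a b u
    simp only [Prod.mk.injEq, map_add, LinearMap.add_apply]
    refine ⟨h1 _ _ _, ?_⟩
    simp only [h1]; abel
  · intro a b u
    simp only [Prod.mk.injEq, map_add, LinearMap.add_apply]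
    refine ⟨h2 _ _ _, ?_⟩
    simp only [h2]; abel
  · intro a b u
    simp only [Prod.mk.injEq, map_add, LinearMap.add_apply]
    refine ⟨h3 _ _ _, ?_⟩
    simp only [h3]; abel
  · intro a u
    simp only [Prod.mk.injEq, map_add, map_sub, map_zero, LinearMap.zero_apply,
      Prod.fst_add, Prod.snd_add, Prod.fst_sub, Prod.snd_sub]
    constructor
    · rw [hRM1]; abel_nf; rw [map_add]
    · simp
  · intro a u
    simp only [Prod.mk.injEq, map_add, map_sub, map_zero, LinearMap.zero_apply,
      LinearMap.map_zero, Prod.fst_add, Prod.snd_add, Prod.fst_sub, Prod.snd_sub]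
    constructor
    · rw [hRM2]; abel_nf; rw [map_add]
    · simp
end

section
/- Skeletal 2-term homotopy Nijenhuis algebras are in bijective correspondence with triples consisting of a Nijenhuis algebra, a Nijenhuis bimodule over it, and a 3-cocycle of the Nijenhuis algebra with coefficients in that bimodule. -/
/-- A skeletal 2-term homotopy Nijenhuis algebra: a 2-term `A∞`-algebra
`(A₁ →(∂=0) A₀, μ₂, μ₃)` together with a homotopy Nijenhuis operator `(N₀, N₁, N₂)`,
with `∂ = 0`.  The fields record the `A∞`-identities and the homotopy Nijenhuis
identities specialized at `∂ = 0`. -/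
structure SkeletalHomotopyNijenhuisAlgebra (k A0 A1 : Type*) [Field k]
    [AddCommGroup A0] [Module k A0] [AddCommGroup A1] [Module k A1] where
  /-- μ₂ on A₀ × A₀ -/
  m : A0 →ₗ[k] A0 →ₗ[k] A0
  /-- μ₂ on A₀ × A₁ -/
  l : A0 →ₗ[k] A1 →ₗ[k] A1
  /-- μ₂ on A₁ × A₀ -/
  r : A1 →ₗ[k] A0 →ₗ[k] A1
  /-- μ₃ -/
  m3 : A0 →ₗ[k] A0 →ₗ[k] A0 →ₗ[k] A1
  N0 : A0 →ₗ[k] A0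
  N1 : A1 →ₗ[k] A1
  N2 : A0 →ₗ[k] A0 →ₗ[k] A1
  assoc : ∀ a b c, m (m a b) c = m a (m b c)
  lmod : ∀ a b u, l (m a b) u = l a (l b u)
  lrmod : ∀ a b u, r (l a u) b = l a (r u b)
  rmod : ∀ a b u, r (r u a) b = r u (m a b)
  m3cocycle : ∀ a b c d,
    l a (m3 b c d) - m3 (m a b) c d + m3 a (m b c) d - m3 a b (m c d) + r (m3 a b c) d = 0
  nijN0 : ∀ a b, N0 (m (N0 a) b + m a (N0 b) - N0 (m a b)) - m (N0 a) (N0 b) = 0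
  nijl : ∀ a u, N1 (l (N0 a) u + l a (N1 u) - N1 (l a u)) - l (N0 a) (N1 u) = 0
  nijr : ∀ a u, N1 (r (N1 u) a + r u (N0 a) - N1 (r u a)) - r (N1 u) (N0 a) = 0
  nij5 : ∀ a b c,
    l (N0 a) (N2 b c) - r (N2 a b) (N0 c)
      - N2 (m (N0 a) b + m a (N0 b) - N0 (m a b)) c
      + N2 a (m (N0 b) c + m b (N0 c) - N0 (m b c))
      - N1 (l a (N2 b c) - N2 (m a b) c + N2 a (m b c) - r (N2 a b) c)
    = m3 (N0 a) (N0 b) (N0 c)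
      - N1 (m3 (N0 a) (N0 b) c) - N1 (m3 (N0 a) b (N0 c)) - N1 (m3 a (N0 b) (N0 c))
      + N1 (N1 (m3 (N0 a) b c)) + N1 (N1 (m3 a (N0 b) c)) + N1 (N1 (m3 a b (N0 c)))
      - N1 (N1 (N1 (m3 a b c)))

/-- A Nijenhuis algebra `((A₀,·),N)`, a Nijenhuis bimodule `((A₁,▷,◁),N_M)` over it, and
a 3-cocycle `(χ, F)` of the Nijenhuis algebra with coefficients in the bimodule. -/
structure NijenhuisThirdCocycleTriple (k A0 A1 : Type*) [Field k]
    [AddCommGroup A0] [Module k A0] [AddCommGroup A1] [Module k A1] where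
  m : A0 →ₗ[k] A0 →ₗ[k] A0
  N : A0 →ₗ[k] A0
  l : A0 →ₗ[k] A1 →ₗ[k] A1
  r : A1 →ₗ[k] A0 →ₗ[k] A1
  NM : A1 →ₗ[k] A1
  chi : A0 →ₗ[k] A0 →ₗ[k] A0 →ₗ[k] A1
  F : A0 →ₗ[k] A0 →ₗ[k] A1
  assoc : ∀ a b c, m (m a b) c = m a (m b c)
  nij : ∀ a b, m (N a) (N b) = N (m (N a) b + m a (N b) - N (m a b))
  lmod : ∀ a b u, l (m a b) u = l a (l b u)
  lrmod : ∀ a b u, r (l a u) b = l a (r u b)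
  rmod : ∀ a b u, r (r u a) b = r u (m a b)
  nbl : ∀ a u, l (N a) (NM u) = NM (l (N a) u + l a (NM u) - NM (l a u))
  nbr : ∀ a u, r (NM u) (N a) = NM (r (NM u) a + r u (N a) - NM (r u a))
  /-- `δ_Hoch χ = 0` -/
  cocycle_hoch : ∀ a b c d,
    l a (chi b c d) - chi (m a b) c d + chi a (m b c) d - chi a b (m c d)
      + r (chi a b c) d = 0
  /-- `d_{N,N_M}(F) + ∂^{N,N_M}(χ) = 0` -/
  cocycle_nij : ∀ a b c,
    (l (N a) (F b c) - r (F a b) (N c)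
        - F (m (N a) b + m a (N b) - N (m a b)) c
        + F a (m (N b) c + m b (N c) - N (m b c))
        - NM (l a (F b c) - F (m a b) c + F a (m b c) - r (F a b) c))
    + (chi (N a) (N b) (N c)
        - NM (chi a (N b) (N c)) - NM (chi (N a) b (N c)) - NM (chi (N a) (N b) c)
        + NM (NM (chi a b (N c))) + NM (NM (chi a (N b) c)) + NM (NM (chi (N a) b c))
        - NM (NM (NM (chi a b c)))) = 0

set_option maxHeartbeats 2000000
/-- Skeletal 2-term homotopy Nijenhuis algebras are in bijective correspondence with
triples consisting of a Nijenhuis algebra, a Nijenhuis bimodule over it, and a 3-cocycle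
of the Nijenhuis algebra with coefficients in that Nijenhuis bimodule. -/
theorem skeletal_homotopy_nijenhuis_equiv_third_cocycles (k A0 A1 : Type*) [Field k]
    [CharZero k] [AddCommGroup A0] [Module k A0] [AddCommGroup A1] [Module k A1] :
    Nonempty (SkeletalHomotopyNijenhuisAlgebra k A0 A1 ≃
      NijenhuisThirdCocycleTriple k A0 A1) := by
  refine ⟨{
    toFun := fun S => {
      m := S.m, N := S.N0, l := S.l, r := S.r, NM := S.N1
      chi := S.m3, F := -S.N2
      assoc := S.assoc
      nij := fun a b => (sub_eq_zero.mp (S.nijN0 a b)).symm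
      lmod := S.lmod, lrmod := S.lrmod, rmod := S.rmod
      nbl := fun a u => (sub_eq_zero.mp (S.nijl a u)).symm
      nbr := fun a u => (sub_eq_zero.mp (S.nijr a u)).symm
      cocycle_hoch := S.m3cocycle
      cocycle_nij := fun a b c => by
        have h := S.nij5 a b c
        simp only [LinearMap.neg_apply, LinearMap.add_apply, LinearMap.sub_apply, LinearMap.smul_apply, map_neg, map_add, map_sub, map_smul] at h ⊢
        linear_combination (norm := abel) -h
    }
    invFun := fun T => {
      m := T.m, l := T.l, r := T.r, m3 := T.chi
      N0 := T.N, N1 := T.NM, N2 := -T.F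
      assoc := T.assoc, lmod := T.lmod, lrmod := T.lrmod, rmod := T.rmod
      m3cocycle := T.cocycle_hoch
      nijN0 := fun a b => sub_eq_zero.mpr (T.nij a b).symm
      nijl := fun a u => sub_eq_zero.mpr (T.nbl a u).symm
      nijr := fun a u => sub_eq_zero.mpr (T.nbr a u).symm
      nij5 := fun a b c => by
        have h := T.cocycle_nij a b c
        simp only [LinearMap.neg_apply, LinearMap.add_apply, LinearMap.sub_apply, LinearMap.smul_apply, map_neg, map_add, map_sub, map_smul] at h ⊢
        linear_combination (norm := abel) -h
    }
    left_inv := fun S => by cases S; simp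
    right_inv := fun T => by cases T; simp
  }⟩
end
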